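/- arXiv:2511.16550 — 3 statements merged into one kernel-verified Lean document; each statement's English description precedes it below -/
import Mathlib

section
/- Suppose a sequence (a_m) of nonnegative real numbers satisfies a_m ≥ (1 - 1/(4m²))·a_{m-1} for all m ≥ 1. Then for all m, a_m ≥ (2/π)·a_0. -/
open Finset

lemma brls_P_mul_W (m : ℕ) :
    (∏ i ∈ range m, (1 - 1 / (4 * ((i : ℝ) + 1) ^ 2))) * Real.Wallis.W m = 1 := by
  induction m with
  | zero => simp [Real.Wallis.W]
  | succ n ih =>
    rw [prod_range_succ, Real.Wallis.W_succ]
    have h1 : (2 * (n : ℝ) + 1) ≠ 0 := by positivity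
    have h3 : (2 * (n : ℝ) + 3) ≠ 0 := by positivity
    have h4 : (4 * ((n : ℝ) + 1) ^ 2) ≠ 0 := by positivity
    have key : (1 - 1 / (4 * ((n : ℝ) + 1) ^ 2)) *
        ((2 * n + 2) / (2 * n + 1) * ((2 * n + 2) / (2 * n + 3))) = 1 := by
      field_simp
      ring
    calc (∏ i ∈ range n, (1 - 1 / (4 * ((i : ℝ) + 1) ^ 2))) *
          (1 - 1 / (4 * ((n : ℝ) + 1) ^ 2)) *
          (Real.Wallis.W n * ((2 * n + 2) / (2 * n + 1) * ((2 * n + 2) / (2 * n + 3))))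
        = ((∏ i ∈ range n, (1 - 1 / (4 * ((i : ℝ) + 1) ^ 2))) * Real.Wallis.W n) *
          ((1 - 1 / (4 * ((n : ℝ) + 1) ^ 2)) *
            ((2 * n + 2) / (2 * n + 1) * ((2 * n + 2) / (2 * n + 3)))) := by ring
      _ = 1 := by rw [ih, key]; ring

lemma brls_P_ge (m : ℕ) :
    2 / Real.pi ≤ ∏ i ∈ range m, (1 - 1 / (4 * ((i : ℝ) + 1) ^ 2)) := by
  have hW := Real.Wallis.W_le m
  have hWpos := Real.Wallis.W_pos m
  have hP := brls_P_mul_W m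
  have hPeq : (∏ i ∈ range m, (1 - 1 / (4 * ((i : ℝ) + 1) ^ 2))) = (Real.Wallis.W m)⁻¹ := by
    field_simp at hP ⊢
    linarith [hP]
  rw [hPeq]
  rw [div_le_iff₀ Real.pi_pos, inv_mul_eq_div, le_div_iff₀ hWpos]
  linarith

/-- Counterexample of Section 3.1: if `a m ≥ (1 - 1/(4 m²)) * a (m-1)` for all
`m ≥ 1` and `a` is nonnegative, then `a m ≥ (2/π) * a 0` for all `m`. -/
theorem brls_counterexample_lower_bound
    (a : ℕ → ℝ) (ha : ∀ m, 0 ≤ a m)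
    (hrec : ∀ m : ℕ, (1 - 1 / (4 * ((m : ℝ) + 1) ^ 2)) * a m ≤ a (m + 1)) :
    ∀ m, (2 / Real.pi) * a 0 ≤ a m := by
  have key : ∀ m, (∏ i ∈ range m, (1 - 1 / (4 * ((i : ℝ) + 1) ^ 2))) * a 0 ≤ a m := by
    intro m
    induction m with
    | zero => simp
    | succ n ih =>
      have hfac : 0 ≤ 1 - 1 / (4 * ((n : ℝ) + 1) ^ 2) := by
        have h1 : (1 : ℝ) ≤ ((n : ℝ) + 1) ^ 2 := by nlinarith [Nat.cast_nonneg (α := ℝ) n]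
        have : 1 / (4 * ((n : ℝ) + 1) ^ 2) ≤ 1 := by
          rw [div_le_one (by positivity)]; linarith
        linarith
      calc (∏ i ∈ range (n + 1), (1 - 1 / (4 * ((i : ℝ) + 1) ^ 2))) * a 0
          = (1 - 1 / (4 * ((n : ℝ) + 1) ^ 2)) *
            ((∏ i ∈ range n, (1 - 1 / (4 * ((i : ℝ) + 1) ^ 2))) * a 0) := by
            rw [prod_range_succ]; ring
        _ ≤ (1 - 1 / (4 * ((n : ℝ) + 1) ^ 2)) * a n := by
            exact mul_le_mul_of_nonneg_left ih hfac
        _ ≤ a (n + 1) := hrec n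
  intro m
  calc (2 / Real.pi) * a 0 ≤ (∏ i ∈ range m, (1 - 1 / (4 * ((i : ℝ) + 1) ^ 2))) * a 0 :=
        mul_le_mul_of_nonneg_right (brls_P_ge m) (ha 0)
    _ ≤ a m := key m
end

section
/- Let f be a target vector in a real Hilbert space H, let 0 < r < 1 and let (μ_m) be nonnegative with μ_m ≤ 1 - r. Define residuals e_0 = f and e_m = e_{m-1} - β_m g_m, where g_m ∈ H with 0 < ‖g_m‖ ≤ b_g, β_m = ⟨e_{m-1}, g_m⟩ / ‖g_m‖², and suppose ⟨e_{m-1}, g_m⟩² ≥ b_g²·(1 - r - μ_m)·‖e_{m-1}‖². Then ‖e_m‖² ≤ (r + μ_m)·‖e_{m-1}‖² for every m. -/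
open scoped RealInnerProductSpace

/-- The SCN single-step inequality: with the optimal weight
`β m = ⟪e (m-1), g m⟫ / ‖g m‖²` and the supervisory inequality
`⟪e (m-1), g m⟫² ≥ b_g² (1 - r - μ m) ‖e (m-1)‖²`, the residuals satisfy
`‖e m‖² ≤ (r + μ m) ‖e (m-1)‖²` for every `m`. -/
theorem scn_step_inequality
    {H : Type*} [NormedAddCommGroup H] [InnerProductSpace ℝ H]
    (f : H) (r b_g : ℝ) (μ : ℕ → ℝ) (e g : ℕ → H)
    (hr : 0 < r ∧ r < 1)
    (hμ : ∀ m, 0 ≤ μ (m + 1) ∧ μ (m + 1) ≤ 1 - r)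
    (he0 : e 0 = f)
    (hg : ∀ m, 0 < ‖g (m + 1)‖ ∧ ‖g (m + 1)‖ ≤ b_g)
    (hsup : ∀ m, b_g ^ 2 * (1 - r - μ (m + 1)) * ‖e m‖ ^ 2 ≤ ⟪e m, g (m + 1)⟫ ^ 2)
    (hrec : ∀ m, e (m + 1) = e m - (⟪e m, g (m + 1)⟫ / ‖g (m + 1)‖ ^ 2) • g (m + 1)) :
    ∀ m, ‖e (m + 1)‖ ^ 2 ≤ (r + μ (m + 1)) * ‖e m‖ ^ 2 := by
  intro m
  set a := ⟪e m, g (m + 1)⟫ with ha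
  set n := ‖g (m + 1)‖ with hn
  have hn0 : 0 < n := (hg m).1
  have hnb : n ≤ b_g := (hg m).2
  have hb0 : 0 < b_g := lt_of_lt_of_le hn0 hnb
  have key : ‖e (m + 1)‖ ^ 2 = ‖e m‖ ^ 2 - a ^ 2 / n ^ 2 := by
    rw [hrec m]
    rw [norm_sub_sq_real, inner_smul_right, norm_smul]
    rw [Real.norm_eq_abs, abs_div, abs_pow, abs_norm, mul_pow, div_pow, sq_abs]
    rw [← ha, ← hn]
    have hn2 : n ^ 2 ≠ 0 := by positivity
    field_simp
    ring
  rw [key]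
  -- a^2 / n^2 ≥ a^2 / b_g^2 ≥ (1 - r - μ) ‖e m‖^2
  have h1 : a ^ 2 / b_g ^ 2 ≤ a ^ 2 / n ^ 2 := by
    apply div_le_div_of_nonneg_left (by positivity) (by positivity)
    exact pow_le_pow_left₀ hn0.le hnb 2
  have h2 : (1 - r - μ (m + 1)) * ‖e m‖ ^ 2 ≤ a ^ 2 / b_g ^ 2 := by
    rw [le_div_iff₀ (by positivity)]
    calc (1 - r - μ (m + 1)) * ‖e m‖ ^ 2 * b_g ^ 2
        = b_g ^ 2 * (1 - r - μ (m + 1)) * ‖e m‖ ^ 2 := by ring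
      _ ≤ a ^ 2 := hsup m
  nlinarith [h1, h2]
end

section
/- Under the hypotheses of the SCN step inequality—f in a real Hilbert space H, 0 < r < 1, nonnegative (μ_m) with μ_m ≤ 1-r and μ_m → 0, e_0 = f, e_m = e_{m-1} - (⟨e_{m-1},g_m⟩/‖g_m‖²)·g_m with 0 < ‖g_m‖ ≤ b_g and ⟨e_{m-1},g_m⟩² ≥ b_g²(1-r-μ_m)‖e_{m-1}‖²—the residuals converge in norm: ‖e_m‖ → 0 as m → ∞. -/
open Filter Topology
open scoped RealInnerProductSpace

/-!
Removing from `x` its component along `g` lowers `‖x‖²` by `⟪x, g⟫² / ‖g‖²`, and the SCN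
inequality makes this at least `(1 - r - μ_m) ‖x‖²`. Hence `‖e_m‖² ≤ (r + μ_m) ‖e_{m-1}‖²` with
ratios tending to `r < 1`, so by the ratio test `∑ ‖e_m‖²` converges and `‖e_m‖² → 0`.
-/

section InnerProduct

variable {H : Type*} [NormedAddCommGroup H] [InnerProductSpace ℝ H]

theorem norm_sub_inner_div_smul_sq (x g : H) :
    ‖x - (⟪x, g⟫ / ‖g‖ ^ 2) • g‖ ^ 2 = ‖x‖ ^ 2 - ⟪x, g⟫ ^ 2 / ‖g‖ ^ 2 := by
  rcases eq_or_ne g 0 with rfl | hg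
  · simp
  have hg2 : ‖g‖ ^ 2 ≠ 0 := by positivity
  rw [norm_sub_sq_real, real_inner_smul_right, norm_smul, Real.norm_eq_abs, mul_pow, sq_abs]
  field_simp
  ring

theorem norm_sub_inner_div_smul_sq_le {x g : H} {b r μ : ℝ} (hg : 0 < ‖g‖) (hgb : ‖g‖ ≤ b)
    (hx : b ^ 2 * (1 - r - μ) * ‖x‖ ^ 2 ≤ ⟪x, g⟫ ^ 2) :
    ‖x - (⟪x, g⟫ / ‖g‖ ^ 2) • g‖ ^ 2 ≤ (r + μ) * ‖x‖ ^ 2 := by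
  have hg2 : 0 < ‖g‖ ^ 2 := by positivity
  have hgain : (1 - r - μ) * ‖x‖ ^ 2 ≤ ⟪x, g⟫ ^ 2 / ‖g‖ ^ 2 := by
    rcases le_or_gt 0 (1 - r - μ) with hμ | hμ
    · rw [le_div_iff₀ hg2]
      calc (1 - r - μ) * ‖x‖ ^ 2 * ‖g‖ ^ 2 ≤ (1 - r - μ) * ‖x‖ ^ 2 * b ^ 2 := by gcongr
        _ = b ^ 2 * (1 - r - μ) * ‖x‖ ^ 2 := by ring
        _ ≤ ⟪x, g⟫ ^ 2 := hx
    · calc (1 - r - μ) * ‖x‖ ^ 2 ≤ 0 := mul_nonpos_of_nonpos_of_nonneg hμ.le (by positivity)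
        _ ≤ ⟪x, g⟫ ^ 2 / ‖g‖ ^ 2 := by positivity
  rw [norm_sub_inner_div_smul_sq]
  linarith

end InnerProduct

theorem tendsto_zero_of_le_mul_of_tendsto_lt_one {a c : ℕ → ℝ} {ρ : ℝ} (ha : ∀ n, 0 ≤ a n)
    (hstep : ∀ n, a (n + 1) ≤ c n * a n) (hc : Tendsto c atTop (𝓝 ρ)) (hρ : ρ < 1) :
    Tendsto a atTop (𝓝 0) := by
  obtain ⟨q, hρq, hq⟩ := exists_between hρ
  have hratio : ∀ᶠ n in atTop, ‖a (n + 1)‖ ≤ q * ‖a n‖ := by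
    filter_upwards [hc.eventually_le_const hρq] with n hn
    rw [Real.norm_of_nonneg (ha _), Real.norm_of_nonneg (ha _)]
    exact (hstep n).trans (mul_le_mul_of_nonneg_right hn (ha n))
  exact (summable_of_ratio_norm_eventually_le hq hratio).tendsto_atTop_zero

theorem scn_residuals_tendsto_zero_general
    {H : Type*} [NormedAddCommGroup H] [InnerProductSpace ℝ H]
    (r b_g : ℝ) (μ : ℕ → ℝ) (e g : ℕ → H)
    (hr : 0 < r ∧ r < 1)
    (hμ0 : Tendsto (fun m => μ (m + 1)) atTop (nhds 0))
    (hg : ∀ m, 0 < ‖g (m + 1)‖ ∧ ‖g (m + 1)‖ ≤ b_g)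
    (hsup : ∀ m, b_g ^ 2 * (1 - r - μ (m + 1)) * ‖e m‖ ^ 2 ≤ ⟪e m, g (m + 1)⟫ ^ 2)
    (hrec : ∀ m, e (m + 1) = e m - (⟪e m, g (m + 1)⟫ / ‖g (m + 1)‖ ^ 2) • g (m + 1)) :
    Tendsto (fun m => ‖e m‖) atTop (nhds 0) := by
  have hstep : ∀ m, ‖e (m + 1)‖ ^ 2 ≤ (r + μ (m + 1)) * ‖e m‖ ^ 2 := fun m => by
    rw [hrec m]
    exact norm_sub_inner_div_smul_sq_le (hg m).1 (hg m).2 (hsup m)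
  have hratio : Tendsto (fun m => r + μ (m + 1)) atTop (𝓝 r) := by
    simpa using tendsto_const_nhds.add hμ0
  have hsq : Tendsto (fun m => ‖e m‖ ^ 2) atTop (𝓝 0) :=
    tendsto_zero_of_le_mul_of_tendsto_lt_one (fun m => by positivity) hstep hratio hr.2
  simpa [Real.sqrt_sq (norm_nonneg _)] using hsq.sqrt

/-- SCN universal approximation (Theorem 2.2): under the stochastic
configuration inequalities with `μ m → 0`, the residuals converge in norm:
`‖e m‖ → 0`. -/
theorem scn_residuals_tendsto_zero
    {H : Type*} [NormedAddCommGroup H] [InnerProductSpace ℝ H]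
    (f : H) (r b_g : ℝ) (μ : ℕ → ℝ) (e g : ℕ → H)
    (hr : 0 < r ∧ r < 1)
    (hμ : ∀ m, 0 ≤ μ (m + 1) ∧ μ (m + 1) ≤ 1 - r)
    (hμ0 : Tendsto (fun m => μ (m + 1)) atTop (nhds 0))
    (he0 : e 0 = f)
    (hg : ∀ m, 0 < ‖g (m + 1)‖ ∧ ‖g (m + 1)‖ ≤ b_g)
    (hsup : ∀ m, b_g ^ 2 * (1 - r - μ (m + 1)) * ‖e m‖ ^ 2 ≤ ⟪e m, g (m + 1)⟫ ^ 2)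
    (hrec : ∀ m, e (m + 1) = e m - (⟪e m, g (m + 1)⟫ / ‖g (m + 1)‖ ^ 2) • g (m + 1)) :
    Tendsto (fun m => ‖e m‖) atTop (nhds 0) :=
  scn_residuals_tendsto_zero_general r b_g μ e g hr hμ0 hg hsup hrec
end
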